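/- Let s₁^{(2)}, …, sₙ^{(2)} be shares in (ZMod 2)^η with XOR equal to S, let d < n, and let m₁, …, m_{n+d-1} satisfy m₁ ⊕ ⋯ ⊕ m_{n+d-1} = 0. Define sᵢ^{(3)} := sᵢ^{(2)} ⊕ mᵢ ⊕ m_{n+i} for 1 ≤ i ≤ d−1, and s_d^{(3)} := XOR over i from d to n of (sᵢ^{(2)} ⊕ mᵢ). Then s₁^{(3)} ⊕ ⋯ ⊕ s_d^{(3)} = S. -/

import Mathlib

/-!
The old shares `s i` and the first `n` masks `m i` all enter the new shares exactly once: the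
indices `i < k` in the first `k` new shares and the indices `k ≤ i < n` in the aggregated last one.
The remaining masks `m (n + i)`, `i < k`, are added to the first `k` new shares. So the new shares
sum to `∑ s + ∑ m`, and the masks sum to zero.
-/

open Finset

theorem sum_replicateToSmaller {M : Type*} [AddCommMonoid M] {k n : ℕ} (hk : k ≤ n)
    (s m : ℕ → M) :
    ∑ i ∈ range k, (s i + m i + m (n + i)) + ∑ i ∈ Ico k n, (s i + m i) =
      ∑ i ∈ range n, s i + ∑ i ∈ range (n + k), m i := by
  rw [sum_range_add, ← sum_range_add_sum_Ico s hk, ← sum_range_add_sum_Ico m hk]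
  simp only [sum_add_distrib]
  abel

theorem stmt_4 (η n d : ℕ) (hd0 : 0 < d) (hd : d < n) (S : Fin η → ZMod 2)
    (s₂ m s₃ : ℕ → (Fin η → ZMod 2))
    (hs₂ : ∑ i ∈ Finset.range n, s₂ i = S)
    (hm : ∑ i ∈ Finset.range (n + d - 1), m i = 0)
    (hs₃₁ : ∀ i < d - 1, s₃ i = s₂ i + m i + m (n + i))
    (hs₃₂ : s₃ (d - 1) = ∑ i ∈ Finset.Ico (d - 1) n, (s₂ i + m i)) :
    ∑ i ∈ Finset.range d, s₃ i = S := by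
  obtain ⟨k, rfl⟩ : ∃ k, d = k + 1 := Nat.exists_eq_add_one.mpr hd0
  rw [Nat.add_sub_cancel] at hs₃₁ hs₃₂
  rw [← Nat.add_assoc, Nat.add_sub_cancel] at hm
  calc ∑ i ∈ range (k + 1), s₃ i
      = ∑ i ∈ range k, (s₂ i + m i + m (n + i)) + ∑ i ∈ Ico k n, (s₂ i + m i) := by
        rw [sum_range_succ, hs₃₂, sum_congr rfl fun i hi => hs₃₁ i (mem_range.mp hi)]
    _ = S := by rw [sum_replicateToSmaller (by omega), hs₂, hm, add_zero]
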